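/- Let f(z) = Σ_{k≥0} a_k z^k be an entire function with real coefficients such that f(r) > 0 for all real r ≥ 0. Then for all integers k ≥ 0, ν ≥ 1 and every real η: the sign of I_k^ν(η, f) equals the sign of A_k^ν(f) (in particular I_k^ν(η, f) > 0 iff A_k^ν(f) > 0, I_k^ν(η, f) = 0 iff A_k^ν(f) = 0, and I_k^ν(η, f) < 0 iff A_k^ν(f) < 0). -/

import Mathlib

open scoped Real
open MeasureTheory

/-- The extension of a sequence `a : ℕ → ℝ` to `ℤ`, vanishing on negative indices. -/
noncomputable def toepEntry (a : ℕ → ℝ) (d : ℤ) : ℝ :=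
  if 0 ≤ d then a d.toNat else 0

/-- The determinant `A_k^ν = det(a_{k+j-l})_{l,j=0,…,ν-1}` (with `a_d = 0` for `d < 0`). -/
noncomputable def toepMinor (a : ℕ → ℝ) (k ν : ℕ) : ℝ :=
  Matrix.det (Matrix.of fun l j : Fin ν => toepEntry a ((k : ℤ) + (j : ℤ) - (l : ℤ)))

/-- The multiple integral
`I_k^ν(η, f) = ∫_{[-π,π]^ν} Re{∏_{j=1}^ν e^{-ikθ_j} f(e^{η+iθ_j})/f(e^η)}`
`· ∏_{α<β} 4 sin²((θ_α-θ_β)/2) dθ_1 ⋯ dθ_ν`. -/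
noncomputable def Iint (f : ℂ → ℂ) (k ν : ℕ) (η : ℝ) : ℝ :=
  ∫ θ : Fin ν → ℝ in Set.Icc (fun _ => -π) (fun _ => π),
    (∏ j : Fin ν, Complex.exp (-Complex.I * (k : ℂ) * (θ j : ℂ)) *
        f (Complex.exp ((η : ℂ) + Complex.I * (θ j : ℂ))) / f ((Real.exp η : ℝ) : ℂ)).re *
      ∏ p ∈ Finset.univ.filter (fun p : Fin ν × Fin ν => p.1 < p.2),
        4 * Real.sin ((θ p.1 - θ p.2) / 2) ^ 2

/-!
Since `4 sin² ((α - β) / 2) = (e^{iβ} - e^{iα}) (e^{-iβ} - e^{-iα})`, the weight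
`∏_{α<β} 4 sin² ((θ_α - θ_β) / 2)` is the product of the Vandermonde determinants
`det (e^{ilθ_j})` and `det (e^{-ilθ_j})`. Andréief's identity turns the `ν`-fold integral into
`ν!` times the determinant of the one-dimensional integrals `∫ w(t) e^{ilt} e^{-imt} dt`, where
`w(t) = e^{-ikt} f(e^{η+it}) / f(e^η)`. These are Fourier coefficients of `f` on the circle of
radius `e^η`, namely `2π a_{k+m-l} e^{(k+m-l)η} / f(e^η)`, and conjugating by `diag (e^{lη})`
removes the exponential weights. Hence `I_k^ν(η, f) = ν! (2π e^{kη} / f(e^η))^ν A_k^ν`, a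
positive multiple of `A_k^ν`.
-/

open Complex (I exp)
open Matrix Finset
open scoped Nat

section Andreief

variable {ι : Type*} [Fintype ι] [DecidableEq ι] {R : Type*} [CommRing R]

theorem sum_sign_mul_sign_mul_prod_eq_factorial_mul_det (M : Matrix ι ι R) :
    ∑ σ : Equiv.Perm ι, ∑ τ : Equiv.Perm ι,
      (Equiv.Perm.sign σ : R) * Equiv.Perm.sign τ * ∏ j, M (σ j) (τ j)
      = (Fintype.card ι)! * M.det := by
  have row_perm (σ : Equiv.Perm ι) :
      ∑ τ : Equiv.Perm ι, (Equiv.Perm.sign σ : R) * Equiv.Perm.sign τ * ∏ j, M (σ j) (τ j)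
        = M.det := by
    have h := det_permute σ M
    rw [← det_transpose, det_apply'] at h
    simp only [transpose_apply, submatrix_apply, id] at h
    simp_rw [mul_assoc, ← mul_sum, h, ← mul_assoc, ← Int.cast_mul, ← Units.val_mul,
      Int.units_mul_self, Units.val_one, Int.cast_one, one_mul]
  simp_rw [row_perm, sum_const, card_univ, Fintype.card_perm, nsmul_eq_mul]

variable {α : Type*} [MeasurableSpace α] (μ : Measure α) [SigmaFinite μ] {𝕜 : Type*} [RCLike 𝕜]

theorem integral_prod_mul_det_mul_det (w : α → 𝕜) (u v : ι → α → 𝕜)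
    (h : ∀ l m, Integrable (fun x => w x * u l x * v m x) μ) :
    ∫ x, (∏ j, w (x j)) * (of fun l j => u l (x j)).det * (of fun m j => v m (x j)).det
        ∂Measure.pi (fun _ => μ)
      = (Fintype.card ι)! * (of fun l m => ∫ x, w x * u l x * v m x ∂μ).det := by
  have expand (x : ι → α) : (∏ j, w (x j)) * (of fun l j => u l (x j)).det *
      (of fun m j => v m (x j)).det = ∑ σ : Equiv.Perm ι, ∑ τ : Equiv.Perm ι,
        (Equiv.Perm.sign σ : 𝕜) * Equiv.Perm.sign τ *
          ∏ j, (w (x j) * u (σ j) (x j) * v (τ j) (x j)) := by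
    rw [mul_assoc, det_apply', det_apply', sum_mul_sum, mul_sum]
    refine sum_congr rfl fun σ _ => ?_
    rw [mul_sum]
    refine sum_congr rfl fun τ _ => ?_
    simp only [of_apply, prod_mul_distrib]
    ring
  have hint (σ τ : Equiv.Perm ι) : Integrable (fun x : ι → α =>
      ∏ j, (w (x j) * u (σ j) (x j) * v (τ j) (x j))) (Measure.pi fun _ => μ) :=
    Integrable.fintype_prod (f := fun j y => w y * u (σ j) y * v (τ j) y) fun j => h _ _
  simp_rw [expand]
  rw [integral_finsetSum _ fun σ _ => integrable_finsetSum _ fun τ _ => (hint σ τ).const_mul _,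
    ← sum_sign_mul_sign_mul_prod_eq_factorial_mul_det]
  refine sum_congr rfl fun σ _ => ?_
  rw [integral_finsetSum _ fun τ _ => (hint σ τ).const_mul _]
  refine sum_congr rfl fun τ _ => ?_
  rw [integral_const_mul,
    integral_fintype_prod_eq_prod (f := fun j y => w y * u (σ j) y * v (τ j) y)]
  simp only [of_apply]

end Andreief

theorem ofReal_four_mul_sin_sq_eq_mul (α β : ℝ) :
    ((4 * Real.sin ((α - β) / 2) ^ 2 : ℝ) : ℂ) =
      (exp (I * β) - exp (I * α)) * (exp (-(I * β)) - exp (-(I * α))) := by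
  have h2cos := Complex.two_cos (α - β)
  rw [Real.sin_sq_eq_half_sub]
  push_cast
  rw [mul_div_cancel₀ _ two_ne_zero]
  have expand : (exp (I * β) - exp (I * α)) * (exp (-(I * β)) - exp (-(I * α)))
      = 2 - (exp ((α - β) * I) + exp (-(α - β) * I)) := by
    simp only [sub_mul, mul_sub, ← Complex.exp_add]
    ring_nf
    simp only [Complex.exp_zero, one_mul]
  rw [expand, ← h2cos]
  ring

theorem prod_filter_lt_eq_prod_prod_Ioi {M : Type*} [CommMonoid M] {n : ℕ}
    (g : Fin n → Fin n → M) :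
    ∏ p ∈ univ.filter (fun p : Fin n × Fin n => p.1 < p.2), g p.1 p.2
      = ∏ i, ∏ j ∈ Ioi i, g i j := by
  rw [prod_filter, Fintype.prod_prod_type]
  refine prod_congr rfl fun i _ => ?_
  rw [← prod_filter, filter_lt_eq_Ioi]

theorem of_exp_mul_eq_transpose_vandermonde {n : ℕ} (z : ℂ) (θ : Fin n → ℝ) :
    (of fun l j : Fin n => exp (z * l * θ j)) = (vandermonde fun j => exp (z * θ j))ᵀ := by
  ext l j
  rw [of_apply, transpose_apply, vandermonde_apply, ← Complex.exp_nat_mul]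
  ring_nf

theorem prod_four_mul_sin_sq_eq_det_mul_det {n : ℕ} (θ : Fin n → ℝ) :
    ((∏ p ∈ univ.filter (fun p : Fin n × Fin n => p.1 < p.2),
        4 * Real.sin ((θ p.1 - θ p.2) / 2) ^ 2 : ℝ) : ℂ) =
      (of fun l j : Fin n => exp (I * l * θ j)).det *
        (of fun l j : Fin n => exp (-I * l * θ j)).det := by
  rw [of_exp_mul_eq_transpose_vandermonde, of_exp_mul_eq_transpose_vandermonde, det_transpose,
    det_transpose, det_vandermonde, det_vandermonde, ← prod_mul_distrib, Complex.ofReal_prod,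
    prod_filter_lt_eq_prod_prod_Ioi
      (g := fun i j => ((4 * Real.sin ((θ i - θ j) / 2) ^ 2 : ℝ) : ℂ))]
  refine prod_congr rfl fun i _ => ?_
  rw [← prod_mul_distrib]
  refine prod_congr rfl fun j _ => ?_
  simp only [ofReal_four_mul_sin_sq_eq_mul, neg_mul]

theorem summable_norm_mul_pow_of_summable {𝕜 : Type*} [NormedField 𝕜] {a : ℕ → 𝕜} {z : 𝕜}
    (hs : Summable fun m => a m * z ^ m) {r : ℝ} (hr₀ : 0 ≤ r) (hr : r < ‖z‖) :
    Summable fun m => ‖a m‖ * r ^ m := by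
  obtain ⟨C, hC⟩ := hs.tendsto_atTop_zero.norm.bddAbove_range
  have hz : 0 < ‖z‖ := hr₀.trans_lt hr
  refine Summable.of_nonneg_of_le (fun m => by positivity) (fun m => ?_)
    ((summable_geometric_of_lt_one (by positivity) ((div_lt_one hz).2 hr)).mul_left C)
  calc ‖a m‖ * r ^ m = ‖a m * z ^ m‖ * (r / ‖z‖) ^ m := by
        rw [norm_mul, norm_pow, div_pow, mul_assoc, mul_div_cancel₀ _ (pow_pos hz m).ne']
    _ ≤ C * (r / ‖z‖) ^ m := by gcongr; exact hC ⟨m, rfl⟩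

theorem summable_abs_mul_pow_of_ne_zero {f : ℂ → ℂ} {a : ℕ → ℝ}
    (ha : ∀ z : ℂ, f z = ∑' m : ℕ, (a m : ℂ) * z ^ m) {z : ℂ} (hz : f z ≠ 0) {r : ℝ}
    (hr₀ : 0 ≤ r) (hr : r < ‖z‖) : Summable fun m => |a m| * r ^ m := by
  -- a divergent series has junk sum `0`, so the series converges wherever `f` does not vanish
  have hs : Summable fun m => (a m : ℂ) * z ^ m := by
    by_contra h
    exact hz ((ha z).trans (tsum_eq_zero_of_not_summable h))
  simpa only [Complex.norm_real, Real.norm_eq_abs] using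
    summable_norm_mul_pow_of_summable hs hr₀ hr

theorem setIntegral_Icc_exp_int_mul_I (n : ℤ) :
    ∫ t in Set.Icc (-π) π, exp (I * n * t) = (if n = 0 then 2 * π else 0 : ℂ) := by
  rw [integral_Icc_eq_integral_Ioc, ← intervalIntegral.integral_of_le (by linarith [Real.pi_pos])]
  split_ifs with hn
  · simp [hn, two_mul]
  · have hc : I * n ≠ 0 := mul_ne_zero Complex.I_ne_zero (Int.cast_ne_zero.2 hn)
    rw [integral_exp_mul_complex hc, div_eq_zero_iff, sub_eq_zero]
    left
    rw [show I * n * (π : ℝ) = I * n * ((-π : ℝ) : ℂ) + n * (2 * π * I) by push_cast; ring,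
      Complex.exp_add, Complex.exp_int_mul_two_pi_mul_I, mul_one]

theorem setIntegral_exp_mul_eq_toepEntry {f : ℂ → ℂ} {a : ℕ → ℝ}
    (ha : ∀ z : ℂ, f z = ∑' m : ℕ, (a m : ℂ) * z ^ m) {η : ℝ}
    (hs : Summable fun m => |a m| * Real.exp η ^ m) (n : ℤ) :
    ∫ t in Set.Icc (-π) π, exp (-(I * n * t)) * f (exp (η + I * t))
      = 2 * π * (toepEntry a n : ℂ) * exp (n * η) := by
  set F : ℕ → ℝ → ℂ := fun m t => a m * exp η ^ m * exp (I * (m - n : ℤ) * t)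
  have hF (t : ℝ) : exp (-(I * n * t)) * f (exp (η + I * t)) = ∑' m, F m t := by
    rw [ha, ← tsum_mul_left]
    refine tsum_congr fun m => ?_
    simp only [F, ← Complex.exp_nat_mul]
    rw [mul_left_comm, ← Complex.exp_add, mul_assoc (a m : ℂ), ← Complex.exp_add]
    congr 2
    push_cast
    ring
  have hF_norm (m : ℕ) (t : ℝ) : ‖F m t‖ = |a m| * Real.exp η ^ m := by
    simp [F, Complex.norm_exp]
  have hF_int (m : ℕ) : IntegrableOn (F m) (Set.Icc (-π) π) := by
    refine Continuous.integrableOn_Icc ?_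
    fun_prop
  have hF_integral (m : ℕ) : ∫ t in Set.Icc (-π) π, F m t
      = a m * exp η ^ m * (if (m - n : ℤ) = 0 then 2 * π else 0 : ℂ) := by
    rw [integral_const_mul, setIntegral_Icc_exp_int_mul_I]
  have hswap : ∫ t in Set.Icc (-π) π, ∑' m, F m t = ∑' m, ∫ t in Set.Icc (-π) π, F m t := by
    refine (integral_tsum_of_summable_integral_norm hF_int ?_).symm
    simp_rw [hF_norm, setIntegral_const, smul_eq_mul]
    exact hs.mul_left _
  simp_rw [hF, hswap, hF_integral]
  rcases le_or_gt 0 n with hn | hn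
  · lift n to ℕ using hn
    rw [tsum_eq_single n fun m hm => by rw [if_neg (by omega), mul_zero], if_pos (by omega),
      toepEntry, if_pos (by omega), Int.toNat_natCast, ← Complex.exp_nat_mul]
    push_cast
    ring
  · rw [toepEntry, if_neg (by omega), Complex.ofReal_zero, mul_zero, zero_mul]
    exact (tsum_congr fun m => by rw [if_neg (by omega), mul_zero]).trans tsum_zero

theorem det_of_mul_toepEntry_mul_exp (a : ℕ → ℝ) (c : ℂ) (k ν : ℕ) (η : ℝ) :
    (of fun l m : Fin ν => c * ((toepEntry a (k + m - l) : ℂ) * exp ((k + m - l : ℤ) * η))).det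
      = (c * exp (k * η)) ^ ν * toepMinor a k ν := by
  set T : Matrix (Fin ν) (Fin ν) ℂ := of fun l m => (toepEntry a (k + m - l) : ℂ)
  have hT : (toepMinor a k ν : ℂ) = T.det := Complex.ofRealHom.map_det _
  have hconj :
      (of fun l m : Fin ν => c * ((toepEntry a (k + m - l) : ℂ) * exp ((k + m - l : ℤ) * η)))
        = of fun l m : Fin ν => (c * exp (k * η) * exp (-(l * η))) * (exp (m * η) * T l m) := by
    ext l m
    have hexp : exp ((k + m - l : ℤ) * η) = exp (k * η) * exp (-(l * η)) * exp (m * η) := by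
      rw [← Complex.exp_add, ← Complex.exp_add]
      push_cast
      ring_nf
    simp only [of_apply, hexp, T]
    ring
  have hcol := det_mul_column (fun l : Fin ν => c * exp (k * η) * exp (-(l * η)))
    (of fun l m : Fin ν => exp (m * η) * T l m)
  simp only [of_apply] at hcol
  have hcancel : (∏ l : Fin ν, exp (-(l * η))) * ∏ m : Fin ν, exp (m * η) = 1 := by
    simp only [← prod_mul_distrib, ← Complex.exp_add, neg_add_cancel, Complex.exp_zero,
      prod_const_one]
  rw [hconj, hcol, det_mul_row, hT, prod_mul_distrib, prod_const, card_univ, Fintype.card_fin]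
  linear_combination ((c * exp (k * η)) ^ ν * T.det) * hcancel

theorem Iint_eq_re_mul_toepMinor {f : ℂ → ℂ} (hf : Continuous f) {a : ℕ → ℝ}
    (ha : ∀ z : ℂ, f z = ∑' m : ℕ, (a m : ℂ) * z ^ m) (k ν : ℕ) {η : ℝ}
    (hs : Summable fun m => |a m| * Real.exp η ^ m) :
    Iint f k ν η =
      ((ν ! : ℂ) * (2 * π / f (Real.exp η) * exp (k * η)) ^ ν * toepMinor a k ν).re := by
  set w : ℝ → ℂ := fun t => exp (-I * k * t) * f (exp (η + I * t)) / f (Real.exp η)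
  set u : Fin ν → ℝ → ℂ := fun l t => exp (I * l * t)
  set v : Fin ν → ℝ → ℂ := fun m t => exp (-I * m * t)
  have hbox : volume.restrict (Set.Icc (fun _ : Fin ν => -π) fun _ => π)
      = Measure.pi fun _ => volume.restrict (Set.Icc (-π) π) := by
    rw [volume_pi, ← Set.pi_univ_Icc, Measure.restrict_pi_pi]
  have hint : IntegrableOn (fun θ : Fin ν → ℝ => (∏ j, w (θ j)) *
      ((∏ p ∈ univ.filter (fun p : Fin ν × Fin ν => p.1 < p.2),
        4 * Real.sin ((θ p.1 - θ p.2) / 2) ^ 2 : ℝ) : ℂ))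
      (Set.Icc (fun _ => -π) fun _ => π) := by
    refine Continuous.integrableOn_Icc ?_
    fun_prop
  have hentry (l m : Fin ν) : ∫ t in Set.Icc (-π) π, w t * u l t * v m t
      = 2 * π / f (Real.exp η) * ((toepEntry a (k + m - l) : ℂ) * exp ((k + m - l : ℤ) * η)) := by
    have hintegrand (t : ℝ) : w t * u l t * v m t = (f (Real.exp η))⁻¹ *
        (exp (-(I * (k + m - l : ℤ) * t)) * f (exp (η + I * t))) := by
      have hexp : exp (-(I * (k + m - l : ℤ) * t))
          = exp (-I * k * t) * exp (I * l * t) * exp (-I * m * t) := by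
        rw [← Complex.exp_add, ← Complex.exp_add]
        push_cast
        ring_nf
      rw [hexp]
      ring
    simp_rw [hintegrand]
    rw [integral_const_mul, setIntegral_exp_mul_eq_toepEntry ha hs]
    ring
  have hwuv (l m : Fin ν) : Integrable (fun t => w t * u l t * v m t)
      (volume.restrict (Set.Icc (-π) π)) := by
    refine Continuous.integrableOn_Icc ?_
    fun_prop
  calc Iint f k ν η
      = (∫ θ in Set.Icc (fun _ => -π) (fun _ => π), (∏ j, w (θ j)) *
          ((∏ p ∈ univ.filter (fun p : Fin ν × Fin ν => p.1 < p.2),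
            4 * Real.sin ((θ p.1 - θ p.2) / 2) ^ 2 : ℝ) : ℂ)).re := by
        rw [Iint, ← RCLike.re_to_complex, ← integral_re hint]
        simp only [RCLike.re_to_complex, Complex.re_mul_ofReal, w]
    _ = (∫ θ, (∏ j, w (θ j)) * (of fun l j => u l (θ j)).det * (of fun m j => v m (θ j)).det
          ∂Measure.pi fun _ => volume.restrict (Set.Icc (-π) π)).re := by
        simp only [hbox, prod_four_mul_sin_sq_eq_det_mul_det, mul_assoc, u, v]
    _ = _ := by
        rw [integral_prod_mul_det_mul_det _ _ _ _ hwuv]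
        simp only [hentry]
        rw [det_of_mul_toepEntry_mul_exp, Fintype.card_fin, mul_assoc]

theorem Real.sign_mul_of_pos {c : ℝ} (hc : 0 < c) (x : ℝ) : Real.sign (c * x) = Real.sign x := by
  rcases lt_trichotomy x 0 with hx | rfl | hx
  · rw [Real.sign_of_neg hx, Real.sign_of_neg (mul_neg_of_pos_of_neg hc hx)]
  · rw [mul_zero]
  · rw [Real.sign_of_pos hx, Real.sign_of_pos (mul_pos hc hx)]

theorem sign_Iint_eq_sign_toepMinor_general (f : ℂ → ℂ) (hf : Differentiable ℂ f)
    (a : ℕ → ℝ) (ha : ∀ z : ℂ, f z = ∑' k : ℕ, (a k : ℂ) * z ^ k)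
    (hpos : ∀ r : ℝ, 0 ≤ r → 0 < (f (r : ℂ)).re ∧ (f (r : ℂ)).im = 0)
    (k ν : ℕ) (η : ℝ) :
    Real.sign (Iint f k ν η) = Real.sign (toepMinor a k ν) := by
  have hs : Summable fun m => |a m| * Real.exp η ^ m := by
    refine summable_abs_mul_pow_of_ne_zero ha (z := (Real.exp η + 1 : ℝ)) ?_ (Real.exp_pos η).le ?_
    · exact fun h => (hpos (Real.exp η + 1) (by positivity)).1.ne' (by rw [h, Complex.zero_re])
    · rw [Complex.norm_real, Real.norm_eq_abs, abs_of_pos (by positivity)]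
      exact lt_add_one _
  obtain ⟨hc, him⟩ := hpos _ (Real.exp_pos η).le
  set c := (f (Real.exp η)).re
  have hf_exp : f (Real.exp η) = c := Complex.ext rfl him
  rw [Iint_eq_re_mul_toepMinor hf.continuous ha k ν hs, hf_exp,
    show (ν ! : ℂ) * (2 * π / c * exp (k * η)) ^ ν * toepMinor a k ν
      = ((ν ! * (2 * π / c * Real.exp (k * η)) ^ ν * toepMinor a k ν : ℝ) : ℂ) by push_cast; ring,
    Complex.ofReal_re, Real.sign_mul_of_pos]
  exact mul_pos (by positivity) (pow_pos (mul_pos (div_pos Real.two_pi_pos hc) (Real.exp_pos _)) ν)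

/-- Let `f(z) = Σ_{k≥0} a_k z^k` be entire with real coefficients and
`f(r) > 0` for all real `r ≥ 0`.  Then for all `k ≥ 0`, `ν ≥ 1` and every real `η`, the
sign of `I_k^ν(η, f)` equals the sign of `A_k^ν(f)`. -/
theorem sign_Iint_eq_sign_toepMinor (f : ℂ → ℂ) (hf : Differentiable ℂ f)
    (a : ℕ → ℝ) (ha : ∀ z : ℂ, f z = ∑' k : ℕ, (a k : ℂ) * z ^ k)
    (hpos : ∀ r : ℝ, 0 ≤ r → 0 < (f (r : ℂ)).re ∧ (f (r : ℂ)).im = 0)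
    (k ν : ℕ) (hν : 1 ≤ ν) (η : ℝ) :
    Real.sign (Iint f k ν η) = Real.sign (toepMinor a k ν) :=
  sign_Iint_eq_sign_toepMinor_general f hf a ha hpos k ν η
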